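/- For every n ∈ ℕ, φ(V_n) = V_n; consequently φ : V → V is a bijection. -/

import Mathlib

/-!
With `ψ = K B_R A*_L + K⁻¹ A_R B*_L` one has `Â = Q(1 - ψ) A_L` and `B̂ = Q(1 - ψ) B_L`, so on
`V_{n+1}` the map `φ` is `Q(1 - ψ)` composed with `v ↦ A φ(A* v) + B φ(B* v)`; by induction on
`n` it remains to invert `1 - ψ` on `V_n`. On a word, `ψ` moves the first letter to the end,
swapping `A ↔ B`, and multiplies by a power of `q`; after `2n` steps a word of length `n` is back,
and a potential (the sum of `±1`-sign products over pairs of letters) shows that the accumulated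
factor is `q^{-4n} ≠ 1`. Hence `ψ^{2n} = q^{-4n}` on `V_n`, and a geometric sum of powers of `ψ`
inverts `1 - ψ` there.
-/

noncomputable section
namespace SqPaper

/-- The two letters: `0 ↦ A`, `1 ↦ B`. -/
abbrev Ltr := Fin 2
def lA : Ltr := 0
def lB : Ltr := 1

/-- The pairing `⟨ , ⟩` on letters: `⟨A,A⟩=⟨B,B⟩=2`, `⟨A,B⟩=⟨B,A⟩=-2`. -/
def brk (x y : Ltr) : ℤ := if x = y then 2 else -2

variable (F : Type*) [Field F]

/-- The free algebra `V` on the two generators, realized as the monoid algebra of the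
free monoid on two letters; the words form the standard basis. -/
abbrev FA := MonoidAlgebra F (FreeMonoid Ltr)

/-- The standard basis vector attached to a word (list of letters). -/
def wd (l : List Ltr) : FA F := MonoidAlgebra.single (FreeMonoid.ofList l) 1

def Agen : FA F := wd F [lA]
def Bgen : FA F := wd F [lB]

/-- View an element of `V` as a finitely supported function on words. -/
def fsp (v : FA F) : FreeMonoid Ltr →₀ F := v.coeff

/-- The symmetric bilinear form on `V` for which the standard basis of words is orthonormal. -/
def form (u v : FA F) : F := (fsp F u).sum fun w c => c * (fsp F v) w

/-- Extend a function on words to an `F`-linear map on `V`. -/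
def mkMap {M : Type*} [AddCommMonoid M] [Module F M] (f : List Ltr → M) :
    FA F →ₗ[F] M :=
  Finsupp.lsum F (fun w => LinearMap.toSpanSingleton F M (f (FreeMonoid.toList w))) ∘ₗ
    (MonoidAlgebra.coeffLinearEquiv F).toLinearMap

/-- `[3]_q = (q³ - q⁻³)/(q - q⁻¹)`. -/
def tri (q : F) : F := (q ^ 3 - q⁻¹ ^ 3) / (q - q⁻¹)

/-- The q-shuffle product on words. -/
def shufW (q : F) : List Ltr → List Ltr → FA F
  | [], v => wd F v
  | u, [] => wd F u
  | a :: u, b :: v =>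
      wd F [a] * shufW q u (b :: v) +
        (q ^ (((a :: u).map (fun x => brk x b)).sum)) • (wd F [b] * shufW q (a :: u) v)
  termination_by u v => u.length + v.length

/-- The q-shuffle product `⋆` on `V`, as a bilinear map. -/
def qshuf (q : F) : FA F →ₗ[F] FA F →ₗ[F] FA F :=
  mkMap F fun u => mkMap F fun v => shufW F q u v

/-- Iterated `⋆`-product of the letters of a word. -/
def thetaW (q : F) : List Ltr → FA F
  | [] => 1
  | a :: t => qshuf F q (wd F [a]) (thetaW q t)

/-- `θ : V → V`, the algebra homomorphism from the free algebra to the q-shuffle algebra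
with `θ(A) = A`, `θ(B) = B`. -/
def theta (q : F) : FA F →ₗ[F] FA F := mkMap F fun l => thetaW F q l

/-- `A_L`, left multiplication by `A` in the free algebra. -/
def AL : FA F →ₗ[F] FA F := LinearMap.mulLeft F (Agen F)
def BL : FA F →ₗ[F] FA F := LinearMap.mulLeft F (Bgen F)
def AR : FA F →ₗ[F] FA F := LinearMap.mulRight F (Agen F)
def BR : FA F →ₗ[F] FA F := LinearMap.mulRight F (Bgen F)

/-- `X*_L` (for the letter `x`): deletes the letter `x` from the front of a word. -/
def delL (x : Ltr) : FA F →ₗ[F] FA F :=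
  mkMap F fun l => if l.head? = some x then wd F l.tail else 0

/-- `X*_R` (for the letter `x`): deletes the letter `x` from the end of a word. -/
def delR (x : Ltr) : FA F →ₗ[F] FA F :=
  mkMap F fun l => if l.getLast? = some x then wd F l.dropLast else 0

/-- `X_ℓ`: left q-shuffle multiplication by the letter `x`. -/
def shL (q : F) (x : Ltr) : FA F →ₗ[F] FA F := qshuf F q (wd F [x])

/-- `X_r`: right q-shuffle multiplication by the letter `x`. -/
def shR (q : F) (x : Ltr) : FA F →ₗ[F] FA F := (qshuf F q).flip (wd F [x])

/-- `X*_ℓ`: the weighted deletion map, deleting an occurrence of the letter `x`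
with weight `q^{⟨v₁,x⟩+⋯+⟨v_{i-1},x⟩}`. -/
def lowL (q : F) (x : Ltr) : FA F →ₗ[F] FA F :=
  mkMap F fun l =>
    ∑ i ∈ Finset.range l.length,
      if l[i]? = some x then
        (q ^ (((l.take i).map (fun y => brk y x)).sum)) • wd F (l.eraseIdx i)
      else 0

/-- `X*_r`: the weighted deletion map, deleting an occurrence of the letter `x`
with weight `q^{⟨vₙ,x⟩+⋯+⟨v_{i+1},x⟩}`. -/
def lowR (q : F) (x : Ltr) : FA F →ₗ[F] FA F :=
  mkMap F fun l =>
    ∑ i ∈ Finset.range l.length,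
      if l[i]? = some x then
        (q ^ (((l.drop (i + 1)).map (fun y => brk y x)).sum)) • wd F (l.eraseIdx i)
      else 0

/-- `K`, the algebra automorphism of the free algebra `V` with `K(A) = q²A`, `K(B) = q⁻²B`;
on a word `v = v₁⋯vₙ` it acts as `K(v) = v·q^{⟨v₁,A⟩+⋯+⟨vₙ,A⟩}`. -/
def Kop (q : F) : FA F →ₗ[F] FA F :=
  mkMap F fun l => (q ^ ((l.map (fun y => brk y lA)).sum)) • wd F l

/-- `K⁻¹`; on a word `v = v₁⋯vₙ` it acts as `K⁻¹(v) = v·q^{⟨v₁,B⟩+⋯+⟨vₙ,B⟩}`. -/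
def Kinv (q : F) : FA F →ₗ[F] FA F :=
  mkMap F fun l => (q ^ ((l.map (fun y => brk y lB)).sum)) • wd F l

/-- `T`, the automorphism of the free algebra swapping `A` and `B`. -/
def Top : FA F →ₗ[F] FA F :=
  mkMap F fun l => wd F (l.map (fun x => if x = lA then lB else lA))

/-- `Â = Q(A_L − K B_R)` and `B̂ = Q(B_L − K⁻¹ A_R)` where `Q = 1 - q²`. -/
def hatOp (q : F) (a : Ltr) : FA F →ₗ[F] FA F :=
  if a = lA then (1 - q ^ 2) • (AL F - Kop F q ∘ₗ BR F)
  else (1 - q ^ 2) • (BL F - Kinv F q ∘ₗ AR F)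

def phiW (q : F) : List Ltr → FA F
  | [] => 1
  | a :: t => hatOp F q a (phiW q t)

/-- The map `φ`: `φ(1) = 1` and `φ(v₁⋯vₙ) = v̂₁v̂₂⋯v̂ₙ(1)`. -/
def phi (q : F) : FA F →ₗ[F] FA F := mkMap F fun l => phiW F q l

/-- `ψ = K B_R A*_L + K⁻¹ A_R B*_L`. -/
def psi (q : F) : FA F →ₗ[F] FA F :=
  Kop F q ∘ₗ BR F ∘ₗ delL F lA + Kinv F q ∘ₗ AR F ∘ₗ delL F lB

/-- `V_n`, the span of the words of length `n`. -/
def Vn (n : ℕ) : Submodule F (FA F) :=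
  Submodule.span F { x | ∃ l : List Ltr, l.length = n ∧ x = wd F l }

/-- `J⁺ = A³B − [3]_q A²BA + [3]_q ABA² − BA³`. -/
def Jp (q : F) : FA F :=
  Agen F ^ 3 * Bgen F - tri F q • (Agen F ^ 2 * Bgen F * Agen F)
    + tri F q • (Agen F * Bgen F * Agen F ^ 2) - Bgen F * Agen F ^ 3

/-- `J⁻ = B³A − [3]_q B²AB + [3]_q BAB² − AB³`. -/
def Jm (q : F) : FA F :=
  Bgen F ^ 3 * Agen F - tri F q • (Bgen F ^ 2 * Agen F * Bgen F)
    + tri F q • (Bgen F * Agen F * Bgen F ^ 2) - Agen F * Bgen F ^ 3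

/-- `J`, the two-sided ideal of the free algebra generated by `J⁺` and `J⁻`
(realized as the `F`-span of the elements `a·J^±·b`). -/
def Jsub (q : F) : Submodule F (FA F) :=
  Submodule.span F { x | ∃ a b : FA F, x = a * Jp F q * b ∨ x = a * Jm F q * b }

/-- `U`, the subalgebra of the q-shuffle algebra `(V,⋆)` generated by `A` and `B`,
realized as the span of all `⋆`-products of the letters. -/
def Usub (q : F) : Submodule F (FA F) :=
  Submodule.span F (Set.range fun l : List Ltr => thetaW F q l)

/-- A `□_q`-module structure on an `F`-vector space `M`: four operators
`x₀, x₁, x₂, x₃` (indices mod 4) satisfying the q-Weyl and q-Serre relations. -/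
structure SqAct (q : F) (M : Type*) [AddCommGroup M] [Module F M] where
  x : ZMod 4 → Module.End F M
  weyl : ∀ i : ZMod 4,
    q • (x i * x (i + 1)) - q⁻¹ • (x (i + 1) * x i) = (q - q⁻¹) • (1 : Module.End F M)
  serre : ∀ i : ZMod 4,
    x i ^ 3 * x (i + 2) - tri F q • (x i ^ 2 * x (i + 2) * x i)
      + tri F q • (x i * x (i + 2) * x i ^ 2) - x (i + 2) * x i ^ 3 = 0

variable {F} {q : F} {M : Type*} [AddCommGroup M] [Module F M]

/-- A `□_q`-module `M` is generated by `ξ` if no proper submodule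
(subspace invariant under all the `xᵢ`) contains `ξ`. -/
def SqAct.Gen (S : SqAct F q M) (ξ : M) : Prop :=
  ∀ W : Submodule F M, (∀ i : ZMod 4, ∀ m ∈ W, S.x i m ∈ W) → ξ ∈ W → W = ⊤

/-- `W_n`: the span of the vectors `u₁u₂⋯uₙ·ξ` with each `uᵢ ∈ {x₀, x₂}`. -/
def SqAct.Wn (S : SqAct F q M) (ξ : M) (n : ℕ) : Submodule F M :=
  Submodule.span F
    { m | ∃ l : List (ZMod 4), l.length = n ∧ (∀ i ∈ l, i = 0 ∨ i = 2) ∧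
        m = l.foldr (fun i acc => S.x i acc) ξ }

end SqPaper

section GeometricSeries

variable {K M : Type*} [Field K] [AddCommGroup M] [Module K M]

theorem Submodule.bijOn_smul {a : K} (ha : a ≠ 0) (W : Submodule K M) :
    Set.BijOn (fun v => a • v) (W : Set M) W :=
  Set.InvOn.bijOn (f' := fun v => a⁻¹ • v)
    ⟨fun v _ => inv_smul_smul₀ ha v, fun v _ => smul_inv_smul₀ ha v⟩
    (fun _ hv => W.smul_mem a hv) (fun _ hv => W.smul_mem _ hv)

/-- On `W`, `(1 - c)⁻¹ ∑_{k<m} Tᵏ` inverts `1 - T`. -/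
theorem Module.End.bijOn_one_sub_of_pow_eq_smul {T : Module.End K M} {W : Submodule K M}
    {m : ℕ} {c : K} (hT : Set.MapsTo T W W) (hpow : ∀ v ∈ W, (T ^ m) v = c • v) (hc : c ≠ 1) :
    Set.BijOn ⇑(1 - T) (W : Set M) W := by
  have hc' : 1 - c ≠ 0 := sub_ne_zero.2 hc.symm
  have hpowMaps : ∀ k : ℕ, Set.MapsTo ⇑(T ^ k) (W : Set M) W := fun k => by
    rw [Module.End.coe_pow]
    exact hT.iterate k
  have hgeom : ∀ v ∈ W, (1 - c)⁻¹ • (1 - T ^ m) v = v := fun v hv => by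
    rw [LinearMap.sub_apply, Module.End.one_apply, hpow v hv,
      show v - c • v = (1 - c) • v by rw [sub_smul, one_smul], inv_smul_smul₀ hc']
  let R : Module.End K M := (1 - c)⁻¹ • ∑ k ∈ Finset.range m, T ^ k
  refine Set.InvOn.bijOn (f' := R)
    ⟨fun v hv => ?_, fun v hv => ?_⟩ (fun v hv => W.sub_mem hv (hT hv)) (fun v hv => ?_)
  · rw [LinearMap.smul_apply, ← Module.End.mul_apply, geom_sum_mul_neg, hgeom v hv]
  · rw [LinearMap.smul_apply, map_smul, ← Module.End.mul_apply, mul_neg_geom_sum, hgeom v hv]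
  · rw [LinearMap.smul_apply, LinearMap.sum_apply]
    exact W.smul_mem _ (W.sum_mem fun k _ => hpowMaps k hv)

end GeometricSeries

namespace SqPaper

variable {F : Type*} [Field F]

theorem mkMap_wd {M : Type*} [AddCommMonoid M] [Module F M] (f : List Ltr → M) (l : List Ltr) :
    mkMap F f (wd F l) = f l := by
  simp [mkMap, wd, MonoidAlgebra.coeffLinearEquiv_apply, MonoidAlgebra.coeff_single]

theorem ext_wd {M : Type*} [AddCommMonoid M] [Module F M] {f g : FA F →ₗ[F] M}
    (h : ∀ l, f (wd F l) = g (wd F l)) : f = g := by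
  refine MonoidAlgebra.lhom_ext' fun a => LinearMap.ext fun b => ?_
  have hs : MonoidAlgebra.single a b = b • wd F (FreeMonoid.toList a) := by
    simp [wd]
  simp only [LinearMap.comp_apply, MonoidAlgebra.lsingle_apply, hs, map_smul, h]

theorem wd_mul (l m : List Ltr) : wd F l * wd F m = wd F (l ++ m) := by
  simp [wd, MonoidAlgebra.single_mul_single]

theorem wd_singleton_mul (x : Ltr) (l : List Ltr) : wd F [x] * wd F l = wd F (x :: l) :=
  wd_mul [x] l

theorem one_eq_wd_nil : (1 : FA F) = wd F [] := rfl

theorem ltr_cases (x : Ltr) : x = lA ∨ x = lB := by revert x; decide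

theorem wd_mem_Vn (l : List Ltr) : wd F l ∈ Vn F l.length :=
  Submodule.subset_span ⟨l, rfl, rfl⟩

theorem mapsTo_Vn {T : FA F →ₗ[F] FA F} {n m : ℕ}
    (h : ∀ l : List Ltr, l.length = n → T (wd F l) ∈ Vn F m) :
    Set.MapsTo T (Vn F n) (Vn F m) := by
  intro v hv
  refine (Submodule.span_le (p := (Vn F m).comap T)).2 ?_ hv
  rintro _ ⟨l, hl, rfl⟩
  exact h l hl

theorem eqOn_Vn {T S : FA F →ₗ[F] FA F} {n : ℕ}
    (h : ∀ l : List Ltr, l.length = n → T (wd F l) = S (wd F l)) :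
    Set.EqOn T S (Vn F n) := by
  intro v hv
  refine (Submodule.span_le (p := LinearMap.eqLocus T S)).2 ?_ hv
  rintro _ ⟨l, hl, rfl⟩
  exact h l hl

/-- The inverses on the `Vₙ`, evaluated on words, assemble to a linear two-sided inverse. -/
theorem bijective_of_bijOn_Vn {T : FA F →ₗ[F] FA F} (hT : ∀ n, Set.BijOn T (Vn F n) (Vn F n)) :
    Function.Bijective T := by
  let χ : FA F →ₗ[F] FA F := mkMap F fun l => Function.invFunOn T (Vn F l.length) (wd F l)
  have hχ : ∀ n, Set.MapsTo χ (Vn F n) (Vn F n) := fun n => mapsTo_Vn fun l hl => by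
    rw [mkMap_wd, hl]
    exact (hT n).surjOn.mapsTo_invFunOn (hl ▸ wd_mem_Vn l)
  have right : T ∘ₗ χ = LinearMap.id := ext_wd fun l => by
    rw [LinearMap.comp_apply, mkMap_wd]
    exact (hT _).invOn_invFunOn.2 (wd_mem_Vn l)
  have left : χ ∘ₗ T = LinearMap.id := ext_wd fun l =>
    (hT l.length).injOn (hχ _ ((hT _).mapsTo (wd_mem_Vn l))) (wd_mem_Vn l)
      (LinearMap.congr_fun right _)
  exact Function.bijective_iff_has_inverse.2
    ⟨χ, LinearMap.congr_fun left, LinearMap.congr_fun right⟩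

theorem delL_wd (x : Ltr) (l : List Ltr) :
    delL F x (wd F l) = if l.head? = some x then wd F l.tail else 0 :=
  mkMap_wd _ l

theorem delL_wd_mul (x y : Ltr) (v : FA F) :
    delL F y (wd F [x] * v) = if x = y then v else 0 := by
  have h : delL F y ∘ₗ LinearMap.mulLeft F (wd F [x]) = if x = y then LinearMap.id else 0 :=
    ext_wd fun l => by split_ifs <;> simp_all [wd_singleton_mul, delL_wd]
  have := LinearMap.congr_fun h v
  split_ifs at this ⊢ <;> exact this

theorem wd_mul_mem_Vn (x : Ltr) {n : ℕ} {v : FA F} (hv : v ∈ Vn F n) :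
    wd F [x] * v ∈ Vn F (n + 1) :=
  mapsTo_Vn (T := LinearMap.mulLeft F (wd F [x])) (fun l hl => by
    rw [LinearMap.mulLeft_apply, wd_singleton_mul, ← hl]
    exact wd_mem_Vn (x :: l)) hv

theorem delL_mem_Vn (x : Ltr) {n : ℕ} {v : FA F} (hv : v ∈ Vn F (n + 1)) :
    delL F x v ∈ Vn F n :=
  mapsTo_Vn (fun l hl => by
    rw [delL_wd]
    split_ifs
    · obtain ⟨a, t, rfl⟩ := List.exists_cons_of_length_eq_add_one hl
      have ht : t.length = n := by simpa using hl
      exact ht ▸ wd_mem_Vn t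
    · exact zero_mem _) hv

theorem sum_wd_mul_delL {n : ℕ} {v : FA F} (hv : v ∈ Vn F (n + 1)) :
    ∑ x : Ltr, wd F [x] * delL F x v = v := by
  have := eqOn_Vn (T := ∑ x : Ltr, LinearMap.mulLeft F (wd F [x]) ∘ₗ delL F x)
    (S := LinearMap.id) (fun l hl => ?_) hv
  · simpa using this
  · obtain ⟨a, t, rfl⟩ := List.exists_cons_of_length_eq_add_one hl
    rcases ltr_cases a with rfl | rfl <;> simp [delL_wd, wd_singleton_mul, lA, lB]

def mapTails (f : FA F → FA F) (v : FA F) : FA F :=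
  ∑ x : Ltr, wd F [x] * f (delL F x v)

theorem delL_mapTails (f : FA F → FA F) (y : Ltr) (v : FA F) :
    delL F y (mapTails f v) = f (delL F y v) := by
  simp only [mapTails, map_sum, delL_wd_mul, Fintype.sum_ite_eq']

theorem mapsTo_mapTails {f : FA F → FA F} {n : ℕ} (hf : Set.MapsTo f (Vn F n) (Vn F n)) :
    Set.MapsTo (mapTails f) (Vn F (n + 1)) (Vn F (n + 1)) := fun _ hv =>
  Submodule.sum_mem _ fun x _ => wd_mul_mem_Vn x (hf (delL_mem_Vn x hv))

theorem bijOn_mapTails {f : FA F → FA F} {n : ℕ} (hf : Set.BijOn f (Vn F n) (Vn F n)) :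
    Set.BijOn (mapTails f) (Vn F (n + 1)) (Vn F (n + 1)) := by
  let g := Function.invFunOn f (Vn F n)
  have hinv : Set.InvOn g f (Vn F n) (Vn F n) := hf.invOn_invFunOn
  have hg : Set.MapsTo g (Vn F n) (Vn F n) := hf.surjOn.mapsTo_invFunOn
  have cancel : ∀ {f' g' : FA F → FA F}, Set.LeftInvOn g' f' (Vn F n) →
      ∀ v ∈ Vn F (n + 1), mapTails g' (mapTails f' v) = v := fun h v hv => by
    conv_rhs => rw [← sum_wd_mul_delL hv]
    exact Finset.sum_congr rfl fun x _ => by rw [delL_mapTails, h (delL_mem_Vn x hv)]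
  exact Set.InvOn.bijOn (f' := mapTails g) ⟨cancel hinv.1, cancel hinv.2⟩
    (mapsTo_mapTails hf.mapsTo) (mapsTo_mapTails hg)

def sw (x : Ltr) : Ltr := if x = lA then lB else lA

theorem sw_sw (x : Ltr) : sw (sw x) = x := by revert x; decide

def sgn (x : Ltr) : ℤ := if x = lA then 1 else -1

theorem sgn_sw (x : Ltr) : sgn (sw x) = -sgn x := by revert x; decide

def sgnSum (l : List Ltr) : ℤ := (l.map sgn).sum

theorem brk_eq (x y : Ltr) : brk x y = 2 * sgn x * sgn y := by revert x y; decide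

theorem sum_map_brk (x : Ltr) (l : List Ltr) :
    (l.map fun y => brk y x).sum = 2 * sgn x * sgnSum l := by
  induction l with
  | nil => simp [sgnSum]
  | cons a t ih =>
    rw [List.map_cons, List.sum_cons, ih, brk_eq]
    simp only [sgnSum, List.map_cons, List.sum_cons]
    ring

theorem psi_wd_nil (q : F) : psi F q (wd F []) = 0 := by
  simp [psi, delL_wd]

theorem psi_wd_cons (q : F) (a : Ltr) (t : List Ltr) :
    psi F q (wd F (a :: t)) = q ^ (2 * sgn a * sgnSum t - 2) • wd F (t ++ [sw a]) := by
  have hAB : lA ≠ lB := by decide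
  rcases ltr_cases a with rfl | rfl <;>
  · simp only [psi, Kop, Kinv, LinearMap.add_apply, LinearMap.comp_apply, delL_wd,
      List.head?_cons, Option.some.injEq, if_pos, if_neg hAB, if_neg hAB.symm, List.tail_cons,
      map_zero, add_zero, zero_add, BR, AR, LinearMap.mulRight_apply, Agen, Bgen, wd_mul,
      mkMap_wd, sum_map_brk]
    congr 2
    simp [sgnSum, sgn, hAB.symm]
    ring

theorem mapsTo_psi (q : F) (n : ℕ) : Set.MapsTo (psi F q) (Vn F n) (Vn F n) :=
  mapsTo_Vn fun l hl => by
    cases l with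
    | nil => rw [psi_wd_nil]; exact zero_mem _
    | cons a t =>
      rw [psi_wd_cons, ← hl]
      simpa using Submodule.smul_mem _ _ (wd_mem_Vn (F := F) (t ++ [sw a]))

def rotSwap : List Ltr → List Ltr
  | [] => []
  | a :: t => t ++ [sw a]

theorem rotSwap_iterate_append (u v : List Ltr) :
    rotSwap^[u.length] (u ++ v) = v ++ u.map sw := by
  induction u generalizing v with
  | nil => simp
  | cons a t ih =>
    rw [List.length_cons, Function.iterate_succ_apply, List.cons_append, rotSwap,
      List.append_assoc, ih]
    simp

theorem rotSwap_iterate_two_mul_length (w : List Ltr) : rotSwap^[2 * w.length] w = w := by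
  have h := rotSwap_iterate_append w []
  have h' := rotSwap_iterate_append (w.map sw) []
  rw [List.append_nil, List.nil_append] at h h'
  rw [two_mul, Function.iterate_add_apply, h, ← List.length_map (f := sw), h', List.map_map]
  conv_rhs => rw [← List.map_id w]
  exact List.map_congr_left fun x _ => sw_sw x

def pairSum : List Ltr → ℤ
  | [] => 0
  | a :: t => sgn a * sgnSum t + pairSum t

theorem pairSum_append_singleton (t : List Ltr) (b : Ltr) :
    pairSum (t ++ [b]) = pairSum t + sgnSum t * sgn b := by
  induction t with
  | nil => simp [pairSum, sgnSum]
  | cons a t ih =>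
    simp only [List.cons_append, pairSum, ih, sgnSum, List.map_append, List.map_cons,
      List.sum_append, List.sum_cons, List.map_nil, List.sum_nil]
    ring

def scaledWd (q : F) (w : List Ltr) : FA F := q ^ (-pairSum w) • wd F w

theorem psi_scaledWd {q : F} (hq : q ≠ 0) (a : Ltr) (t : List Ltr) :
    psi F q (scaledWd q (a :: t)) = q ^ (-2 : ℤ) • scaledWd q (rotSwap (a :: t)) := by
  simp only [scaledWd, map_smul, psi_wd_cons, smul_smul, rotSwap, ← zpow_add₀ hq]
  congr 2
  rw [pairSum, pairSum_append_singleton, sgn_sw]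
  ring

theorem psi_pow_scaledWd {q : F} (hq : q ≠ 0) (k : ℕ) {w : List Ltr} (hw : w ≠ []) :
    (psi F q ^ k) (scaledWd q w) = q ^ (-2 * k : ℤ) • scaledWd q (rotSwap^[k] w) := by
  induction k generalizing w with
  | zero => simp
  | succ k ih =>
    obtain ⟨a, t, rfl⟩ := List.exists_cons_of_ne_nil hw
    rw [pow_succ, Module.End.mul_apply, psi_scaledWd hq, map_smul, ih (by simp [rotSwap]),
      smul_smul, ← zpow_add₀ hq, Function.iterate_succ_apply]
    congr 2
    push_cast
    ring

theorem psi_pow_two_mul {q : F} (hq : q ≠ 0) {n : ℕ} {v : FA F} (hv : v ∈ Vn F n) :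
    (psi F q ^ (2 * n)) v = (q ^ (4 * n))⁻¹ • v := by
  refine eqOn_Vn (T := psi F q ^ (2 * n)) (S := (q ^ (4 * n))⁻¹ • LinearMap.id)
    (fun l hl => ?_) hv
  rcases eq_or_ne l [] with rfl | hl0
  · subst hl
    simp
  have hwd : wd F l = q ^ pairSum l • scaledWd q l := by
    rw [scaledWd, smul_smul, ← zpow_add₀ hq, add_neg_cancel, zpow_zero, one_smul]
  rw [hwd, map_smul, psi_pow_scaledWd hq _ hl0, ← hl, rotSwap_iterate_two_mul_length,
    LinearMap.smul_apply, LinearMap.id_apply, smul_comm]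
  congr 2
  rw [← zpow_natCast, ← zpow_neg]
  push_cast
  ring_nf

theorem hatOp_apply (q : F) (x : Ltr) (v : FA F) :
    hatOp F q x v = (1 - q ^ 2) • (wd F [x] * v - psi F q (wd F [x] * v)) := by
  rcases ltr_cases x with rfl | rfl <;>
    simp [hatOp, psi, delL_wd_mul, AL, BL, Agen, Bgen, lA, lB]

theorem phi_wd_mul (q : F) (x : Ltr) (v : FA F) :
    phi F q (wd F [x] * v) = hatOp F q x (phi F q v) := by
  refine LinearMap.congr_fun (ext_wd (f := phi F q ∘ₗ LinearMap.mulLeft F (wd F [x]))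
    (g := hatOp F q x ∘ₗ phi F q) fun l => ?_) v
  simp [wd_singleton_mul, phi, mkMap_wd, phiW]

theorem phi_eqOn_Vn_zero (q : F) : Set.EqOn (phi F q) id (Vn F 0) :=
  eqOn_Vn (T := phi F q) (S := LinearMap.id) fun l hl => by
    rw [List.length_eq_zero_iff.1 hl]
    simp [phi, mkMap_wd, phiW, one_eq_wd_nil]

theorem phi_eqOn_Vn_succ (q : F) (n : ℕ) :
    Set.EqOn (phi F q) ((fun v => (1 - q ^ 2) • v) ∘ ⇑(1 - psi F q) ∘ mapTails (phi F q))
      (Vn F (n + 1)) := by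
  intro v hv
  conv_lhs => rw [← sum_wd_mul_delL hv]
  simp only [Function.comp_apply, map_sum, phi_wd_mul, hatOp_apply, mapTails, ← Finset.smul_sum,
    Finset.sum_sub_distrib, LinearMap.sub_apply, Module.End.one_apply]

theorem bijOn_phi_Vn {q : F} (hq : q ≠ 0) (hq1 : ∀ k : ℕ, 0 < k → q ^ k ≠ 1) :
    ∀ n, Set.BijOn (phi F q) (Vn F n) (Vn F n)
  | 0 => (Set.bijOn_id _).congr (phi_eqOn_Vn_zero q).symm
  | n + 1 => by
    have hQ : (1 : F) - q ^ 2 ≠ 0 := sub_ne_zero.2 (hq1 2 two_pos).symm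
    have hc : (q ^ (4 * (n + 1)))⁻¹ ≠ 1 := inv_ne_one.2 (hq1 _ (by omega))
    have hψ := Module.End.bijOn_one_sub_of_pow_eq_smul (mapsTo_psi q (n + 1))
      (fun _ hv => psi_pow_two_mul hq hv) hc
    exact (((Submodule.bijOn_smul hQ _).comp hψ).comp
      (bijOn_mapTails (bijOn_phi_Vn hq hq1 n))).congr (phi_eqOn_Vn_succ q n).symm

end SqPaper

open SqPaper in
/-- `φ(V_n) = V_n` for all `n`, and consequently `φ` is a bijection. -/
theorem phi_bijective (F : Type*) [Field F] (q : F) (hq : q ≠ 0)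
    (hq1 : ∀ k : ℕ, 0 < k → q ^ k ≠ 1) :
    (∀ n : ℕ, Submodule.map (phi F q) (Vn F n) = Vn F n) ∧
      Function.Bijective (phi F q) := by
  have hφ := bijOn_phi_Vn hq hq1
  exact ⟨fun n => SetLike.coe_injective ((Submodule.map_coe _ _).trans (hφ n).image_eq),
    bijective_of_bijOn_Vn hφ⟩
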